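/- Suppose two unit intervals y and z (each open or closed) intersect, and z is closed. If three pairwise-disjoint open/closed unit intervals all intersect z, then at least one of them intersects y. -/

import Mathlib

/-!
Each unit interval `s i` is squeezed between `Ioo r (r + 1)` and `Icc r (r + 1)`. Meeting
`[b, b + 1]` forces `r ∈ [b - 1, b + 1]`, and disjointness forces the left endpoints to be at
least `1` apart, so they are exactly `b - 1`, `b`, `b + 1`. The middle interval contains
`(b, b + 1)`, and the outer two can only meet `[b, b + 1]` at `b` and at `b + 1` respectively,
so the three intervals cover `[b, b + 1]`, which `y` meets.
-/

/-- A set of reals is an open or closed unit interval. -/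
def IsUnitInterval (s : Set ℝ) : Prop :=
  ∃ r : ℝ, s = Set.Icc r (r + 1) ∨ s = Set.Ioo r (r + 1)

open Set

theorem IsUnitInterval.exists_Ioo_subset_subset_Icc {s : Set ℝ} (hs : IsUnitInterval s) :
    ∃ r, Ioo r (r + 1) ⊆ s ∧ s ⊆ Icc r (r + 1) := by
  obtain ⟨r, rfl | rfl⟩ := hs
  · exact ⟨r, Ioo_subset_Icc_self, subset_rfl⟩
  · exact ⟨r, subset_rfl, Ioo_subset_Icc_self⟩

theorem mem_Icc_of_subset_Icc_of_inter_Icc_nonempty {s : Set ℝ} {r b : ℝ}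
    (hs : s ⊆ Icc r (r + 1)) (hsz : (s ∩ Icc b (b + 1)).Nonempty) :
    r ∈ Icc (b - 1) (b + 1) := by
  obtain ⟨p, hps, hpb, hpb'⟩ := hsz
  obtain ⟨hrp, hpr⟩ := hs hps
  constructor <;> linarith

theorem one_le_abs_sub_of_Ioo_subset_of_inter_eq_empty {s t : Set ℝ} {r r' : ℝ}
    (hs : Ioo r (r + 1) ⊆ s) (ht : Ioo r' (r' + 1) ⊆ t) (hst : s ∩ t = ∅) :
    1 ≤ |r - r'| := by
  by_contra! hlt
  have hne : (Ioo r (r + 1) ∩ Ioo r' (r' + 1)).Nonempty := by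
    rw [Ioo_inter_Ioo, nonempty_Ioo, max_lt_iff, lt_min_iff, lt_min_iff]
    obtain ⟨h₁, h₂⟩ := abs_sub_lt_iff.1 hlt
    refine ⟨⟨?_, ?_⟩, ?_, ?_⟩ <;> linarith
  exact (hne.mono (inter_subset_inter hs ht)).ne_empty hst

theorem insert_subset_range_of_pairwise_one_le_abs_sub {r : Fin 3 → ℝ} {b : ℝ}
    (hr : ∀ i, r i ∈ Icc (b - 1) (b + 1)) (hsep : Pairwise fun i j => 1 ≤ |r i - r j|) :
    {b - 1, b, b + 1} ⊆ range r := by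
  have h₀ := hr 0
  have h₁ := hr 1
  have h₂ := hr 2
  simp only [mem_Icc] at h₀ h₁ h₂
  have h₀₁ := le_abs.1 (hsep (by decide : (0 : Fin 3) ≠ 1))
  have h₀₂ := le_abs.1 (hsep (by decide : (0 : Fin 3) ≠ 2))
  have h₁₂ := le_abs.1 (hsep (by decide : (1 : Fin 3) ≠ 2))
  simp only [insert_subset_iff, singleton_subset_iff, mem_range, Fin.exists_fin_succ,
    Fin.exists_fin_zero, Fin.succ_zero_eq_one, Fin.succ_one_eq_two, or_false]
  rcases h₀₁ with h₀₁ | h₀₁ <;> rcases h₀₂ with h₀₂ | h₀₂ <;> rcases h₁₂ with h₁₂ | h₁₂ <;>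
    refine ⟨?_, ?_, ?_⟩ <;>
    first
      | (left; linarith)
      | (right; left; linarith)
      | (right; right; linarith)

theorem Icc_subset_iUnion_of_pairwise_disjoint_unitInterval {s : Fin 3 → Set ℝ} {b : ℝ}
    (hunit : ∀ i, IsUnitInterval (s i)) (hdisj : Pairwise fun i j => s i ∩ s j = ∅)
    (hint : ∀ i, (s i ∩ Icc b (b + 1)).Nonempty) : Icc b (b + 1) ⊆ ⋃ i, s i := by
  choose r hIoo hIcc using fun i => (hunit i).exists_Ioo_subset_subset_Icc
  have hrange : {b - 1, b, b + 1} ⊆ range r :=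
    insert_subset_range_of_pairwise_one_le_abs_sub
      (fun i => mem_Icc_of_subset_Icc_of_inter_Icc_nonempty (hIcc i) (hint i))
      (fun i j hij =>
        one_le_abs_sub_of_Ioo_subset_of_inter_eq_empty (hIoo i) (hIoo j) (hdisj hij))
  obtain ⟨i, hi⟩ := hrange (by simp : b - 1 ∈ _)
  obtain ⟨j, hj⟩ := hrange (by simp : b ∈ _)
  obtain ⟨k, hk⟩ := hrange (by simp : b + 1 ∈ _)
  intro x ⟨hbx, hxb⟩
  rw [mem_iUnion]
  rcases hbx.eq_or_lt with rfl | hbx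
  · obtain ⟨p, hps, hp⟩ := hint i
    obtain ⟨-, hpr⟩ := hIcc i hps
    obtain rfl : p = b := le_antisymm (by linarith) hp.1
    exact ⟨i, hps⟩
  rcases hxb.eq_or_lt with rfl | hxb
  · obtain ⟨p, hps, hp⟩ := hint k
    obtain ⟨hrp, -⟩ := hIcc k hps
    obtain rfl : p = b + 1 := le_antisymm hp.2 (by linarith)
    exact ⟨k, hps⟩
  · exact ⟨j, hIoo j ⟨by linarith, by linarith⟩⟩

theorem stmt19_general (b : ℝ) (y z : Set ℝ)
    (hz : z = Set.Icc b (b + 1)) (hyz : (y ∩ z).Nonempty)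
    (s : Fin 3 → Set ℝ) (hunit : ∀ i, IsUnitInterval (s i))
    (hdisj : ∀ i j, i ≠ j → s i ∩ s j = ∅)
    (hint : ∀ i, (s i ∩ z).Nonempty) :
    ∃ i, (s i ∩ y).Nonempty := by
  subst hz
  obtain ⟨x, hxy, hxz⟩ := hyz
  obtain ⟨i, hxs⟩ := mem_iUnion.1 (Icc_subset_iUnion_of_pairwise_disjoint_unitInterval hunit
    hdisj hint hxz)
  exact ⟨i, x, hxs, hxy⟩

/-- If unit intervals `y` and `z` intersect with `z` closed, then of any three
pairwise-disjoint open/closed unit intervals all meeting `z`, at least one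
meets `y`. -/
theorem stmt19 (b : ℝ) (y z : Set ℝ) (hy : IsUnitInterval y)
    (hz : z = Set.Icc b (b + 1)) (hyz : (y ∩ z).Nonempty)
    (s : Fin 3 → Set ℝ) (hunit : ∀ i, IsUnitInterval (s i))
    (hdisj : ∀ i j, i ≠ j → s i ∩ s j = ∅)
    (hint : ∀ i, (s i ∩ z).Nonempty) :
    ∃ i, (s i ∩ y).Nonempty :=
  stmt19_general b y z hz hyz s hunit hdisj hint
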